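/- arXiv:2009.06464 — 2 statements merged into one kernel-verified Lean document; each statement's English description precedes it below -/
import Mathlib

section
/- For every prime p not equal to 2, 3, 5, 7, or 17, there exists a prime q < p with q ≡ 3 (mod 4) such that q is a quadratic residue modulo p. -/
/-- Every natural number `≡ 3 (mod 4)` has a prime factor `≡ 3 (mod 4)`. -/
lemma aux_exists_prime_dvd_mod4 : ∀ n : ℕ, n % 4 = 3 → ∃ q, Nat.Prime q ∧ q ∣ n ∧ q % 4 = 3 := by
  intro n
  induction n using Nat.strong_induction_on with
  | _ n ih =>
    intro hn
    have h1 : n ≠ 1 := by omega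
    obtain ⟨q, hq, hqd⟩ := Nat.exists_prime_and_dvd h1
    have hq2 : q ≠ 2 := by
      rintro rfl
      obtain ⟨k, rfl⟩ := hqd
      omega
    have hqodd : q % 2 = 1 := hq.eq_two_or_odd.resolve_left hq2
    rcases Nat.odd_mod_four_iff.mp hqodd with hq1 | hq3
    · -- q % 4 = 1, recurse on n / q
      obtain ⟨m, rfl⟩ := hqd
      have hm3 : m % 4 = 3 := by
        have := Nat.mul_mod q m 4
        rw [hq1] at this
        omega
      have hmlt : m < q * m := by
        have h2q : 2 ≤ q := hq.two_le
        have hm0 : 0 < m := by omega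
        calc m = 1 * m := (one_mul m).symm
        _ < q * m := (Nat.mul_lt_mul_right hm0).mpr hq.one_lt
      obtain ⟨r, hr, hrd, hr3⟩ := ih m hmlt hm3
      exact ⟨r, hr, hrd.mul_left q, hr3⟩
    · exact ⟨q, hq, hqd, hq3⟩

lemma aux_key3 (p q a : ℕ) (hp : p.Prime) (hq : q.Prime) (hp3 : p % 4 = 3) (hq3 : q % 4 = 3)
    (hne : p ≠ q) (hdvd : q ∣ a ^ 2 + p) : IsSquare ((q : ℕ) : ZMod p) := by
  haveI := Fact.mk hp
  haveI := Fact.mk hq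
  rw [ZMod.exists_sq_eq_prime_iff_of_mod_four_eq_three hp3 hq3 hne]
  rintro ⟨r, hr⟩
  have h0 : ((a ^ 2 + p : ℕ) : ZMod q) = 0 := (CharP.cast_eq_zero_iff (ZMod q) q _).mpr hdvd
  push_cast at h0
  have hpne : ((p : ℕ) : ZMod q) ≠ 0 := by
    intro h
    have : q ∣ p := (CharP.cast_eq_zero_iff (ZMod q) q p).mp h
    exact hne ((Nat.prime_dvd_prime_iff_eq hq hp).mp this).symm
  have hr0 : r ≠ 0 := by
    rintro rfl
    rw [mul_zero] at hr
    exact hpne hr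
  have hsq : IsSquare (-1 : ZMod q) := by
    refine ⟨(a : ZMod q) * r⁻¹, ?_⟩
    field_simp
    linear_combination -h0 + hr
  rw [ZMod.exists_sq_eq_neg_one_iff] at hsq
  exact hsq hq3

lemma aux_key1 (p q a : ℕ) (hp : p.Prime) (hq : q.Prime) (hp1 : p % 4 = 1) (hq3 : q % 4 = 3)
    (hdvd : (q : ℤ) ∣ 4 * (p : ℤ) - (a : ℤ) ^ 2) : IsSquare ((q : ℕ) : ZMod p) := by
  haveI := Fact.mk hp
  haveI := Fact.mk hq
  have hq2 : q ≠ 2 := by omega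
  rw [ZMod.exists_sq_eq_prime_iff_of_mod_four_eq_one hp1 hq2]
  have h4 : ((4 * (p : ℤ) - (a : ℤ) ^ 2 : ℤ) : ZMod q) = 0 :=
    (ZMod.intCast_zmod_eq_zero_iff_dvd _ q).mpr hdvd
  push_cast at h4
  have h2 : (2 : ZMod q) ≠ 0 := by
    intro h
    have h' : ((2 : ℕ) : ZMod q) = 0 := by exact_mod_cast h
    have : q ∣ 2 := (CharP.cast_eq_zero_iff (ZMod q) q 2).mp h'
    have := Nat.le_of_dvd (by norm_num) this
    omega
  refine ⟨(a : ZMod q) * 2⁻¹, ?_⟩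
  field_simp
  linear_combination h4

lemma aux_conclude (p q : ℕ) (hp : p.Prime) (h : IsSquare ((q : ℕ) : ZMod p)) :
    ∃ x : ℤ, x ^ 2 ≡ (q : ℤ) [ZMOD p] := by
  haveI := Fact.mk hp
  obtain ⟨r, hr⟩ := h
  refine ⟨(r.val : ℤ), ?_⟩
  rw [← ZMod.intCast_eq_intCast_iff]
  push_cast
  rw [ZMod.natCast_val, ZMod.cast_id, hr]
  ring

/-- For every prime `p` not equal to 2, 3, 5, 7, or 17, there exists a prime `q < p`
with `q ≡ 3 (mod 4)` which is a quadratic residue modulo `p`. -/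
theorem stmt_0 (p : ℕ) (hp : p.Prime) (h2 : p ≠ 2) (h3 : p ≠ 3) (h5 : p ≠ 5)
    (h7 : p ≠ 7) (h17 : p ≠ 17) :
    ∃ q : ℕ, q.Prime ∧ q < p ∧ q % 4 = 3 ∧ ∃ x : ℤ, x ^ 2 ≡ (q : ℤ) [ZMOD p] := by
  have hpodd : p % 2 = 1 := hp.eq_two_or_odd.resolve_left h2
  rcases Nat.odd_mod_four_iff.mp hpodd with hp1 | hp3
  · -- p % 4 = 1
    by_cases hbig : p < 73
    · -- small cases
      have hmem : p = 13 ∨ p = 29 ∨ p = 37 ∨ p = 41 ∨ p = 53 ∨ p = 61 := by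
        clear hpodd h2 h3 h7
        revert h5 h17 hp1 hp
        interval_cases p <;> decide
      rcases hmem with rfl | rfl | rfl | rfl | rfl | rfl
      · exact ⟨3, by norm_num, by norm_num, by norm_num, 4, by decide⟩
      · exact ⟨7, by norm_num, by norm_num, by norm_num, 6, by decide⟩
      · exact ⟨3, by norm_num, by norm_num, by norm_num, 15, by decide⟩
      · exact ⟨23, by norm_num, by norm_num, by norm_num, 8, by decide⟩
      · exact ⟨7, by norm_num, by norm_num, by norm_num, 22, by decide⟩
      · exact ⟨3, by norm_num, by norm_num, by norm_num, 8, by decide⟩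
    · push_neg at hbig
      set s := Nat.sqrt (4 * p) with hs
      have hs2 : s * s ≤ 4 * p := by
        have h := Nat.sqrt_le' (4 * p); rw [pow_two] at h; exact h
      have hs2' : 4 * p < (s + 1) * (s + 1) := by
        have h := Nat.lt_succ_sqrt' (4 * p); rw [Nat.succ_eq_add_one, pow_two] at h; exact h
      set a := if s % 2 = 1 then s else s - 1 with ha
      have hs1 : 1 ≤ s := by
        rcases Nat.lt_or_ge s 1 with h | h
        · interval_cases s <;> omega
        · exact h
      have haodd : a % 2 = 1 := by
        rw [ha]; split <;> omega
      have halow : s - 1 ≤ a ∧ a ≤ s := by rw [ha]; split <;> omega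
      obtain ⟨k, hk⟩ : ∃ k, a = 2 * k + 1 := ⟨a / 2, by omega⟩
      have hasq : a ^ 2 % 4 = 1 := by
        rw [hk]; ring_nf; omega
      have haub : a ^ 2 ≤ s * s := by
        have : a * a ≤ s * s := Nat.mul_le_mul halow.2 halow.2
        nlinarith
      have hne4 : a ^ 2 ≠ 4 * p := by omega
      have halt : a ^ 2 < 4 * p := lt_of_le_of_ne (le_trans haub hs2) hne4
      have hupper : 4 * p < (a + 2) ^ 2 := by
        have h1 : s + 1 ≤ a + 2 := by omega
        have : (s + 1) * (s + 1) ≤ (a + 2) * (a + 2) := Nat.mul_le_mul h1 h1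
        nlinarith
      set N := 4 * p - a ^ 2 with hN
      have hN3 : N % 4 = 3 := by omega
      have hexp : (a + 2) ^ 2 = a ^ 2 + 4 * a + 4 := by ring
      have hNlt : N < p := by
        have h1 : N < 4 * a + 4 := by omega
        have h2 : 4 * s + 4 ≤ p := by
          by_contra hcon
          push_neg at hcon
          have h4p : 4 * p ≤ 16 * s + 12 := by omega
          have hss : s * s ≤ 16 * s + 12 := by linarith
          have hs17 : s ≤ 16 := by
            by_contra hs17
            push_neg at hs17
            have h17 : 17 * s ≤ s * s := Nat.mul_le_mul_right s hs17
            linarith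
          omega
        omega
      obtain ⟨q, hqp, hqd, hq3⟩ := aux_exists_prime_dvd_mod4 N hN3
      have hqle : q ≤ N := Nat.le_of_dvd (by omega) hqd
      have hdvdZ : (q : ℤ) ∣ 4 * (p : ℤ) - (a : ℤ) ^ 2 := by
        have : ((N : ℕ) : ℤ) = 4 * (p : ℤ) - (a : ℤ) ^ 2 := by
          push_cast [hN, Nat.cast_sub (le_of_lt halt)]
          ring
        rw [← this]
        exact_mod_cast hqd
      exact ⟨q, hqp, by omega, hq3, aux_conclude p q hp (aux_key1 p q a hp hqp hp1 hq3 hdvdZ)⟩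
  · -- p % 4 = 3
    have h11 : 11 ≤ p := by
      rcases Nat.lt_or_ge p 11 with h | h
      · interval_cases p <;> omega
      · exact h
    obtain ⟨a, M, hMd, hM3, hMlt⟩ : ∃ a M : ℕ, M ∣ a ^ 2 + p ∧ M % 4 = 3 ∧ M < p := by
      rcases show p % 16 = 3 ∨ p % 16 = 11 ∨ p % 32 = 7 ∨ p % 32 = 15 ∨ p % 32 = 23 ∨
          p % 32 = 31 by omega with h | h | h | h | h | h
      · exact ⟨3, (9 + p) / 4, ⟨4, by omega⟩, by omega, by omega⟩
      · exact ⟨1, (1 + p) / 4, ⟨4, by omega⟩, by omega, by omega⟩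
      · exact ⟨7, (49 + p) / 8, ⟨8, by omega⟩, by omega, by omega⟩
      · exact ⟨3, (9 + p) / 8, ⟨8, by omega⟩, by omega, by omega⟩
      · exact ⟨1, (1 + p) / 8, ⟨8, by omega⟩, by omega, by omega⟩
      · exact ⟨5, (25 + p) / 8, ⟨8, by omega⟩, by omega, by omega⟩
    obtain ⟨q, hqp, hqd, hq3⟩ := aux_exists_prime_dvd_mod4 M hM3
    have hqle : q ≤ M := Nat.le_of_dvd (by omega) hqd
    have hdvd : q ∣ a ^ 2 + p := hqd.trans hMd
    exact ⟨q, hqp, by omega, hq3,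
      aux_conclude p q hp (aux_key3 p q a hp hqp hp3 hq3 (by omega) hdvd)⟩
end

section
/- For every prime p ≥ 5, there exists a prime q < p with q ≡ 3 (mod 4) such that q is a quadratic non-residue modulo p. -/
/-!
If `p ≡ 3 (mod 4)`, take a prime factor `q ≡ 3 (mod 4)` of `p - 4`: then `p ≡ 2²` is a square
modulo `q`, so by quadratic reciprocity `q` is not a square modulo `p`.

If `p ≡ 1 (mod 4)`, reciprocity turns the claim into finding a prime `q < p`, `q ≡ 3 (mod 4)`,
modulo which `p` is not a square. Dirichlet's theorem provides some such `q`; take the least one.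
If it exceeded `p`, then `-p ≡ k² (mod q)` for some even `k < q`, and `k² + p = q m` with `m < q`
and `m ≡ 3 (mod 4)`. A prime factor `r ≡ 3 (mod 4)` of `m` has `-p` a square and `-1` a
non-square modulo `r`, so `p` is a non-square modulo `r < q`, contradicting minimality.
-/

theorem Nat.exists_prime_mod_four_eq_three_dvd {n : ℕ} (hn : n % 4 = 3) :
    ∃ q : ℕ, q.Prime ∧ q % 4 = 3 ∧ q ∣ n := by
  -- the residues `0, 1, 2` modulo `4` are closed under multiplication
  suffices h : ∀ n : ℕ, (∀ q, q.Prime → q ∣ n → q % 4 ≠ 3) → n % 4 ≠ 3 by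
    by_contra! hq
    exact h n (fun q hq' hqn h3 => hq q hq' h3 hqn) hn
  intro n
  induction n using Nat.recOnMul with
  | zero => intro; decide
  | one => intro; decide
  | prime p hp => exact fun h => h p hp dvd_rfl
  | mul a b iha ihb =>
    intro h
    have ha := iha fun q hq hqa => h q hq (hqa.mul_right b)
    have hb := ihb fun q hq hqb => h q hq (hqb.mul_left a)
    rw [Nat.mul_mod]
    have := Nat.mod_lt a four_pos
    have := Nat.mod_lt b four_pos
    interval_cases a % 4 <;> interval_cases b % 4 <;> omega

theorem ZMod.exists_sq_modEq_iff_isSquare {n : ℕ} {a : ℤ} :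
    (∃ x : ℤ, x ^ 2 ≡ a [ZMOD n]) ↔ IsSquare (a : ZMod n) := by
  simp_rw [← ZMod.intCast_eq_intCast_iff, Int.cast_pow]
  constructor
  · rintro ⟨x, hx⟩
    exact ⟨x, by rw [← hx, sq]⟩
  · rintro ⟨y, hy⟩
    obtain ⟨x, rfl⟩ := ZMod.intCast_surjective y
    exact ⟨x, by rw [hy, sq]⟩

theorem FiniteField.isSquare_neg_iff_not_isSquare {F : Type*} [Field F] [Fintype F]
    (h : ¬IsSquare (-1 : F)) {a : F} (ha : a ≠ 0) : IsSquare (-a) ↔ ¬IsSquare a := by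
  classical
  rw [← quadraticChar_one_iff_isSquare (neg_ne_zero.mpr ha),
    ← quadraticChar_neg_one_iff_not_isSquare, neg_eq_neg_one_mul, map_mul,
    quadraticChar_neg_one_iff_not_isSquare.mpr h, neg_one_mul, neg_eq_iff_eq_neg]

theorem ZMod.exists_even_lt_sq_eq {q : ℕ} (hq : Odd q) (x : ZMod q) :
    ∃ k : ℕ, Even k ∧ k < q ∧ (k : ZMod q) ^ 2 = x ^ 2 := by
  have : NeZero q := ⟨hq.pos.ne'⟩
  rcases Nat.even_or_odd x.val with h | h
  · exact ⟨x.val, h, x.val_lt, by rw [ZMod.natCast_zmod_val]⟩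
  · refine ⟨q - x.val, Nat.Odd.sub_odd hq h, Nat.sub_lt hq.pos h.pos, ?_⟩
    rw [Nat.cast_sub x.val_lt.le, ZMod.natCast_self, ZMod.natCast_zmod_val]
    ring

theorem exists_prime_mod_four_eq_three_not_isSquare {p : ℕ} [Fact p.Prime] (hp2 : p ≠ 2) :
    ∃ q : ℕ, q.Prime ∧ q % 4 = 3 ∧ ¬IsSquare (q : ZMod p) := by
  obtain ⟨n, hn⟩ := FiniteField.exists_nonsquare (F := ZMod p) (by rwa [ZMod.ringChar_zmod_n])
  have hcop : Nat.Coprime 4 p :=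
    ((Nat.coprime_primes Nat.prime_two Fact.out).mpr (Ne.symm hp2)).pow_left 2
  -- Dirichlet's theorem in the unit class of `4p` that is `3` modulo `4` and `n` modulo `p`
  let e := ZMod.chineseRemainder hcop
  have hu : IsUnit (e.symm (3, n)) :=
    (Prod.isUnit_iff.mpr ⟨IsUnit.of_mul_eq_one (a := (3 : ZMod 4)) 3 (by decide),
      Ne.isUnit (by rintro rfl; exact hn ⟨0, by simp⟩)⟩).map e.symm
  obtain ⟨q, -, hq, hqa⟩ := Nat.forall_exists_prime_gt_and_eq_mod hu 0
  have hqe : ((q : ZMod 4), (q : ZMod p)) = (3, n) := by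
    rw [← e.apply_symm_apply (3, n), ← hqa, map_natCast]
    rfl
  obtain ⟨h4, hpn⟩ := Prod.mk.inj hqe
  refine ⟨q, hq, ?_, hpn ▸ hn⟩
  rw [← ZMod.val_natCast, h4]
  rfl

theorem exists_smaller_prime_mod_four_eq_three_not_isSquare {p q : ℕ} (hp : p.Prime)
    (hp1 : p % 4 = 1) (hq : q.Prime) (hq3 : q % 4 = 3) (hpq : p < q)
    (hns : ¬IsSquare (p : ZMod q)) :
    ∃ r : ℕ, r < q ∧ r.Prime ∧ r % 4 = 3 ∧ ¬IsSquare (p : ZMod r) := by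
  have := Fact.mk hq
  have := Fact.mk hp
  have hp0 : (p : ZMod q) ≠ 0 := fun h => hns (by rw [h]; exact IsSquare.zero)
  obtain ⟨x, hx⟩ := (FiniteField.isSquare_neg_iff_not_isSquare
    (by rw [ZMod.exists_sq_eq_neg_one_iff]; omega) hp0).mpr hns
  obtain ⟨k, hk2, hkq, hk⟩ := ZMod.exists_even_lt_sq_eq (hq.odd_of_ne_two (by omega)) x
  obtain ⟨m, hm⟩ : q ∣ k ^ 2 + p := by
    rw [← ZMod.natCast_eq_zero_iff]
    push_cast
    rw [hk, sq, ← hx, neg_add_cancel]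
  have hm3 : m % 4 = 3 := by
    have h4 : (k ^ 2 + p) % 4 = 1 := by
      obtain ⟨t, rfl⟩ := hk2
      rw [show (t + t) ^ 2 + p = p + 4 * (t * t) by ring, Nat.add_mul_mod_self_left, hp1]
    have := Nat.mul_mod q m 4
    rw [← hm, h4, hq3] at this
    omega
  have hmq : m < q := by
    by_contra! h
    nlinarith [Nat.mul_le_mul_left q h]
  obtain ⟨r, hr, hr3, hrm⟩ := Nat.exists_prime_mod_four_eq_three_dvd hm3
  refine ⟨r, (Nat.le_of_dvd (by omega) hrm).trans_lt hmq, hr, hr3, ?_⟩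
  have := Fact.mk hr
  have hrN : ((k ^ 2 + p : ℕ) : ZMod r) = 0 :=
    (ZMod.natCast_eq_zero_iff _ _).mpr (hm ▸ hrm.mul_left q)
  push_cast at hrN
  rw [← FiniteField.isSquare_neg_iff_not_isSquare (by rw [ZMod.exists_sq_eq_neg_one_iff]; omega)
    (ZMod.prime_ne_zero r p (by omega))]
  exact ⟨k, by linear_combination -hrN⟩

theorem exists_prime_lt_not_isSquare_of_mod_four_eq_one {p : ℕ} [Fact p.Prime] (hp1 : p % 4 = 1) :
    ∃ q : ℕ, q < p ∧ q.Prime ∧ q % 4 = 3 ∧ ¬IsSquare (q : ZMod p) := by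
  classical
  have hex : ∃ q : ℕ, q.Prime ∧ q % 4 = 3 ∧ ¬IsSquare (p : ZMod q) := by
    obtain ⟨q, hq, hq3, hns⟩ := exists_prime_mod_four_eq_three_not_isSquare (p := p) (by omega)
    have := Fact.mk hq
    exact ⟨q, hq, hq3, by rwa [← ZMod.exists_sq_eq_prime_iff_of_mod_four_eq_one hp1 (by omega)]⟩
  obtain ⟨hq, hq3, hns⟩ := Nat.find_spec hex
  have hlt : Nat.find hex < p := by
    by_contra! hge
    obtain ⟨r, hr, hrp⟩ := exists_smaller_prime_mod_four_eq_three_not_isSquare Fact.out hp1 hq hq3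
      (hge.lt_of_ne (by omega)) hns
    exact Nat.find_min hex hr hrp
  have := Fact.mk hq
  exact ⟨_, hlt, hq, hq3, by rwa [ZMod.exists_sq_eq_prime_iff_of_mod_four_eq_one hp1 (by omega)]⟩

theorem exists_prime_lt_not_isSquare_of_mod_four_eq_three {p : ℕ} [Fact p.Prime]
    (hp3 : p % 4 = 3) (hp : 3 < p) :
    ∃ q : ℕ, q < p ∧ q.Prime ∧ q % 4 = 3 ∧ ¬IsSquare (q : ZMod p) := by
  obtain ⟨q, hq, hq3, hqp⟩ := Nat.exists_prime_mod_four_eq_three_dvd (n := p - 4) (by omega)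
  have := Fact.mk hq
  have hqlt : q < p := (Nat.le_of_dvd (by omega) hqp).trans_lt (by omega)
  refine ⟨q, hqlt, hq, hq3, ?_⟩
  rw [ZMod.exists_sq_eq_prime_iff_of_mod_four_eq_three hp3 hq3 hqlt.ne', not_not]
  have hp4 : (p : ZMod q) = 2 ^ 2 := by
    rw [← Nat.sub_add_cancel (by omega : 4 ≤ p), Nat.cast_add,
      (ZMod.natCast_eq_zero_iff _ _).mpr hqp]
    norm_num
  exact hp4 ▸ IsSquare.sq 2

/-- For every prime `p ≥ 5`, there exists a prime `q < p` with `q ≡ 3 (mod 4)`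
which is a quadratic non-residue modulo `p`. -/
theorem stmt_1 (p : ℕ) (hp : p.Prime) (hp5 : 5 ≤ p) :
    ∃ q : ℕ, q.Prime ∧ q < p ∧ q % 4 = 3 ∧ ¬ ∃ x : ℤ, x ^ 2 ≡ (q : ℤ) [ZMOD p] := by
  have := Fact.mk hp
  obtain ⟨q, hqp, hq, hq3, hns⟩ :
      ∃ q : ℕ, q < p ∧ q.Prime ∧ q % 4 = 3 ∧ ¬IsSquare (q : ZMod p) := by
    rcases Nat.odd_mod_four_iff.mp (hp.mod_two_eq_one_iff_ne_two.mpr (by omega)) with hp1 | hp3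
    · exact exists_prime_lt_not_isSquare_of_mod_four_eq_one hp1
    · exact exists_prime_lt_not_isSquare_of_mod_four_eq_three hp3 (by omega)
  refine ⟨q, hq, hqp, hq3, ?_⟩
  rwa [ZMod.exists_sq_modEq_iff_isSquare, Int.cast_natCast]
end
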